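/- arXiv:2501.16660 — 6 statements merged into one kernel-verified Lean document; each statement's English description precedes it below -/
import Mathlib

section
/- Let f : ℝ → ℝ be a C² function that is 2π-periodic and nonnegative. Then for any constant C ≥ sup |f''|, we have |f'(x)·y| ≤ f(x) + (C/2)·y² for all real x and y with |y| ≤ 2π (in fact for all real y). -/
theorem stmt0 (f : ℝ → ℝ) (hf : ContDiff ℝ 2 f)
    (hper : ∀ x, f (x + 2 * Real.pi) = f x) (hnn : ∀ x, 0 ≤ f x)
    (C : ℝ) (hC : C ≥ ⨆ x, |deriv (deriv f) x|) :
    ∀ x y : ℝ, |deriv f x * y| ≤ f x + (C / 2) * y ^ 2 := by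
  have h2 : ContDiff ℝ ((1 : WithTop ℕ∞) + 1) f := by norm_num; exact hf
  rw [contDiff_succ_iff_deriv] at h2
  obtain ⟨hdf, -, h1⟩ := h2
  rw [contDiff_one_iff_deriv] at h1
  obtain ⟨hdf', hcont''⟩ := h1
  -- periodicity of deriv f and deriv (deriv f)
  have perd : ∀ g : ℝ → ℝ, (∀ x, g (x + 2 * Real.pi) = g x) →
      ∀ x, deriv g (x + 2 * Real.pi) = deriv g x := by
    intro g hg x
    have h1 : deriv (fun t => g (t + 2 * Real.pi)) x = deriv g (x + 2 * Real.pi) :=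
      deriv_comp_add_const g (2 * Real.pi) x
    have h2 : (fun t => g (t + 2 * Real.pi)) = g := funext hg
    rw [h2] at h1
    exact h1.symm
  have perf' := perd f hper
  have perf'' := perd (deriv f) perf'
  -- boundedness of |f''|
  have hperiodic : Function.Periodic (fun x => |deriv (deriv f) x|) (2 * Real.pi) := by
    intro x; simp [perf'' x]
  have hbd : BddAbove (Set.range fun x => |deriv (deriv f) x|) := by
    have := hperiodic.isBounded_of_continuous (by positivity) hcont''.abs
    exact this.bddAbove
  have hCx : ∀ x, |deriv (deriv f) x| ≤ C := fun x =>
    le_trans (le_ciSup hbd x) hC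
  -- key pointwise second-order bound
  have key : ∀ x t : ℝ, f (x + t) ≤ f x + deriv f x * t + C / 2 * t ^ 2 := by
    intro x t
    set h : ℝ → ℝ := fun t => f x + deriv f x * t + C / 2 * t ^ 2 - f (x + t) with hh
    set h' : ℝ → ℝ := fun t => deriv f x + C * t - deriv f (x + t) with hh'
    have hder : ∀ s, HasDerivAt h (h' s) s := by
      intro s
      have hfc : HasDerivAt (fun t => f (x + t)) (deriv f (x + s)) s := by
        have := ((hdf (x + s)).hasDerivAt).comp s ((hasDerivAt_id s).const_add x)
        simpa [Function.comp_def] using this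
      have hpoly : HasDerivAt (fun t => f x + deriv f x * t + C / 2 * t ^ 2)
          (deriv f x + C * s) s := by
        have := ((hasDerivAt_id s).const_mul (deriv f x)).const_add (f x)
        have h2 := ((hasDerivAt_pow 2 s).const_mul (C / 2))
        have := this.add h2
        convert this using 1
        · rfl
        · rfl
        · rfl
        ring
      simpa [hh, hh', Pi.sub_def] using hpoly.sub hfc
    have hder' : ∀ s, HasDerivAt h' (C - deriv (deriv f) (x + s)) s := by
      intro s
      have hfc : HasDerivAt (fun t => deriv f (x + t)) (deriv (deriv f) (x + s)) s := by
        have := ((hdf' (x + s)).hasDerivAt).comp s ((hasDerivAt_id s).const_add x)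
        simpa [Function.comp_def] using this
      have hpoly : HasDerivAt (fun t => deriv f x + C * t) C s := by
        simpa using ((hasDerivAt_id s).const_mul C).const_add (deriv f x)
      simpa [hh', Pi.sub_def] using hpoly.sub hfc
    have hmono : Monotone h' := by
      apply monotone_of_deriv_nonneg (fun s => (hder' s).differentiableAt)
      intro s
      rw [(hder' s).deriv]
      have := hCx (x + s)
      rw [abs_le] at this
      linarith [this.2]
    have h'0 : h' 0 = 0 := by simp [hh']
    have h0 : h 0 = 0 := by simp [hh]
    have hnonneg : 0 ≤ h t := by
      rcases le_or_gt 0 t with ht | ht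
      · have : MonotoneOn h (Set.Ici 0) := by
          apply monotoneOn_of_deriv_nonneg (convex_Ici 0)
            (Continuous.continuousOn (by
              have : Differentiable ℝ h := fun s => (hder s).differentiableAt
              exact this.continuous))
            (fun s hs => (hder s).differentiableAt.differentiableWithinAt)
          intro s hs
          rw [(hder s).deriv]
          rw [interior_Ici] at hs
          have := hmono (le_of_lt hs)
          rw [h'0] at this
          exact this
        have := this (Set.self_mem_Ici) (Set.mem_Ici.2 ht) ht
        rwa [h0] at this
      · have : AntitoneOn h (Set.Iic 0) := by
          apply antitoneOn_of_deriv_nonpos (convex_Iic 0)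
            (Continuous.continuousOn (by
              have : Differentiable ℝ h := fun s => (hder s).differentiableAt
              exact this.continuous))
            (fun s hs => (hder s).differentiableAt.differentiableWithinAt)
          intro s hs
          rw [(hder s).deriv]
          rw [interior_Iic] at hs
          have := hmono (le_of_lt hs)
          rw [h'0] at this
          exact this
        have := this (Set.mem_Iic.2 ht.le) Set.self_mem_Iic ht.le
        rwa [h0] at this
    have := hnonneg
    simp only [hh] at this
    linarith
  intro x y
  have k1 := key x y
  have k2 := key x (-y)
  have n1 := hnn (x + y)
  have n2 := hnn (x + -y)
  rw [abs_le]
  constructor <;> nlinarith [sq_nonneg y]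
end

section
/- Let γ be differentiable and define Q(φ,θ) = γ(θ−φ) + γ(θ)cos φ − γ'(θ)sin φ. With p = |p|(cos φ, sin φ)ᵀ and q = |q|(cos θ, sin θ)ᵀ, the symmetric surface energy matrix satisfies (1/|q|)·(Ẑ_k(θ)p)·q = |p|·(Q(θ−φ, θ) − γ(φ)). -/
noncomputable def Lmat (θ : ℝ) : Matrix (Fin 2) (Fin 2) ℝ :=
  !![-Real.sin (2 * θ), Real.cos (2 * θ); Real.cos (2 * θ), Real.sin (2 * θ)]
noncomputable def nvec (θ : ℝ) : Fin 2 → ℝ := ![-Real.sin θ, Real.cos θ]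
noncomputable def tvec (θ : ℝ) : Fin 2 → ℝ := ![Real.cos θ, Real.sin θ]
noncomputable def Zhat (γ k : ℝ → ℝ) (θ : ℝ) : Matrix (Fin 2) (Fin 2) ℝ :=
  γ θ • (1 : Matrix (Fin 2) (Fin 2) ℝ) + deriv γ θ • Lmat θ +
    k θ • Matrix.vecMulVec (nvec θ) (nvec θ)
noncomputable def Pfun (γ : ℝ → ℝ) (α φ θ : ℝ) : ℝ :=
  γ θ - deriv γ θ * Real.sin (2 * φ) + α * Real.sin φ ^ 2
noncomputable def Qfun (γ : ℝ → ℝ) (φ θ : ℝ) : ℝ :=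
  γ (θ - φ) + γ θ * Real.cos φ - deriv γ θ * Real.sin φ
theorem stmt7 (γ k : ℝ → ℝ) (hγ : Differentiable ℝ γ) (θ φ r s : ℝ)
    (hr : 0 ≤ r) (hs : 0 < s) :
    (1 / s) * dotProduct ((Zhat γ k θ).mulVec (r • tvec φ)) (s • tvec θ) =
      r * (Qfun γ (θ - φ) θ - γ φ) := by
  have h : θ - (θ - φ) = φ := by ring
  simp [Zhat, Lmat, nvec, tvec, Qfun, Matrix.mulVec, dotProduct,
    Matrix.vecMulVec, Fin.sum_univ_two, Matrix.one_apply, h,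
    Real.cos_sub, Real.sin_sub, Real.sin_two_mul, Real.cos_two_mul]
  field_simp
  linear_combination (2 * r * Real.cos θ * Real.sin φ * deriv γ θ) * Real.sin_sq_add_cos_sq θ
end

section
/- Local energy estimate: Let γ : ℝ → ℝ be C², 2π-periodic, positive, satisfying 3γ(θ) − γ(θ−π) ≥ 0 for all θ. Suppose k : ℝ → ℝ satisfies 4γ(θ)·P_{k(θ)}(φ,θ) ≥ Q(φ,θ)² for all φ, θ, where P_α(φ,θ) = γ(θ) − γ'(θ)sin 2φ + α sin²φ and Q(φ,θ) = γ(θ−φ) + γ(θ)cos φ − γ'(θ)sin φ. Then for any nonzero vectors p = |p|(cos φ, sin φ)ᵀ and q = |q|(cos θ, sin θ)ᵀ in ℝ², (1/|q|)·(Ẑ_k(θ)p)·(p − q) ≥ γ(φ)|p| − γ(θ)|q|. -/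
theorem stmt9 (γ k : ℝ → ℝ) (hγ : ContDiff ℝ 2 γ)
    (hper : ∀ x, γ (x + 2 * Real.pi) = γ x) (hpos : ∀ x, 0 < γ x)
    (hstab : ∀ θ, 0 ≤ 3 * γ θ - γ (θ - Real.pi))
    (hk : ∀ φ θ : ℝ, 4 * γ θ * Pfun γ (k θ) φ θ ≥ Qfun γ φ θ ^ 2)
    (θ φ r s : ℝ) (hr : 0 < r) (hs : 0 < s) :
    (1 / s) * dotProduct ((Zhat γ k θ).mulVec (r • tvec φ))
        (r • tvec φ - s • tvec θ) ≥ γ φ * r - γ θ * s := by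
  have hk1 := hk (θ - φ) θ
  have e1 : θ - (θ - φ) = φ := by ring
  rw [Pfun, Qfun, e1, Real.sin_two_mul, Real.sin_sub, Real.cos_sub] at hk1
  have pθ := Real.sin_sq_add_cos_sq θ
  have pφ := Real.sin_sq_add_cos_sq φ
  simp only [Zhat, Lmat, nvec, tvec]
  set sθ := Real.sin θ; set cθ := Real.cos θ; set sφ := Real.sin φ; set cφ := Real.cos φ
  set g := γ θ; set gp := deriv γ θ; set kk := k θ; set gφ := γ φ
  set Pe := g - gp * (2 * (sθ * cφ - cθ * sφ) * (cθ * cφ + sθ * sφ)) + kk * (sθ * cφ - cθ * sφ) ^ 2 with hPe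
  set Qe := gφ + g * (cθ * cφ + sθ * sφ) - gp * (sθ * cφ - cθ * sφ) with hQe
  rw [ge_iff_le, one_div, inv_mul_eq_div, le_div_iff₀ hs]
  have hd : dotProduct
      ((g • (1 : Matrix (Fin 2) (Fin 2) ℝ) + gp • !![-Real.sin (2 * θ), Real.cos (2 * θ); Real.cos (2 * θ), Real.sin (2 * θ)] + kk • Matrix.vecMulVec ![-sθ, cθ] ![-sθ, cθ]).mulVec (r • ![cφ, sφ]))
        (r • ![cφ, sφ] - s • ![cθ, sθ])
      = Pe * r ^ 2 - Qe * r * s + g * s ^ 2 + (gφ * r - g * s) * s := by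
    simp only [dotProduct, Matrix.mulVec, Matrix.add_apply, Matrix.smul_apply,
      Matrix.one_apply, Matrix.vecMulVec_apply, Matrix.cons_val', Matrix.cons_val_zero,
      Matrix.cons_val_one, Matrix.head_cons, Fin.sum_univ_two,
      Matrix.cons_val_fin_one, Pi.smul_apply, Pi.sub_apply, smul_eq_mul, Matrix.of_apply,
      Matrix.empty_val']
    norm_num [Real.sin_two_mul, Real.cos_two_mul', hPe, hQe]
    linear_combination (gp * r * s * (sθ * cφ - cθ * sφ)) * pθ + (g * r ^ 2) * pφ
  rw [hd]
  nlinarith [hpos θ, sq_nonneg (Qe * r - 2 * g * s), mul_le_mul_of_nonneg_right hk1 (sq_nonneg r)]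
end

section
/- Necessity of the stability condition: Let γ : ℝ → ℝ be positive and 2π-periodic, and suppose Ẑ(θ) is any 2×2 real matrix-valued function satisfying τ(θ)ᵀ Ẑ(θ) τ(θ) = γ(θ) where τ(θ) = (cos θ, sin θ)ᵀ. If the local energy estimate (1/|q|)(Ẑ(θ)p)·(p−q) ≥ γ(φ)|p| − γ(θ)|q| holds for all nonzero p = |p|(cos φ, sin φ)ᵀ, q = |q|(cos θ, sin θ)ᵀ, then 3γ(θ) − γ(θ−π) ≥ 0 for all θ. -/
lemma tvec_pi (θ : ℝ) : tvec (θ + Real.pi) = -tvec θ := by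
  funext i
  fin_cases i <;> simp [tvec, Real.cos_add_pi, Real.sin_add_pi]

theorem stmt10 (γ : ℝ → ℝ) (hpos : ∀ x, 0 < γ x)
    (hper : ∀ x, γ (x + 2 * Real.pi) = γ x)
    (Z : ℝ → Matrix (Fin 2) (Fin 2) ℝ)
    (hZ : ∀ θ, dotProduct (tvec θ) ((Z θ).mulVec (tvec θ)) = γ θ)
    (hloc : ∀ θ φ r s : ℝ, 0 < r → 0 < s →
      (1 / s) * dotProduct ((Z θ).mulVec (r • tvec φ))
          (r • tvec φ - s • tvec θ) ≥ γ φ * r - γ θ * s) :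
    ∀ θ, 0 ≤ 3 * γ θ - γ (θ - Real.pi) := by
  intro θ
  have hper' : γ (θ - Real.pi) = γ (θ + Real.pi) := by
    have := hper (θ - Real.pi)
    rw [show θ - Real.pi + 2 * Real.pi = θ + Real.pi by ring] at this
    linarith
  have key := hloc θ (θ + Real.pi) 1 1 one_pos one_pos
  rw [tvec_pi] at key
  simp only [one_smul] at key
  have hdot : dotProduct ((Z θ).mulVec (-tvec θ)) (-tvec θ - tvec θ)
      = 2 * γ θ := by
    rw [Matrix.mulVec_neg, neg_dotProduct, dotProduct_sub,
      dotProduct_neg, dotProduct_comm, hZ]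
    ring
  rw [hdot] at key
  simp only [one_div, inv_one, one_mul, mul_one] at key
  linarith [key]
end

section
/- Lower bound of Q: Let γ : ℝ → ℝ be C², 2π-periodic, positive. With P_0(φ,θ) = γ(θ) − γ'(θ)sin 2φ and Q(φ,θ) = γ(θ−φ) + γ(θ)cos φ − γ'(θ)sin φ, one has Q(φ,θ) + P_0(φ,θ) + γ(θ) ≥ −(9/2)·(sup|γ''|)·sin²φ for all φ, θ. -/
open Real Set

/-- Second-order Taylor upper bound: if `|γ''| ≤ M` everywhere then
`γ (x + t) ≤ γ x + γ' x * t + M t² / 2`. -/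
lemma taylor_up_aux {γ : ℝ → ℝ} (hγ : ContDiff ℝ 2 γ) {M : ℝ}
    (hM : ∀ x, |deriv (deriv γ) x| ≤ M) (x t : ℝ) :
    γ (x + t) ≤ γ x + deriv γ x * t + M * t ^ 2 / 2 := by
  have h2 : ContDiff ℝ 1 (deriv γ) := by
    have h21 : (2 : WithTop ℕ∞) = 1 + 1 := by norm_num
    rw [h21] at hγ
    exact (contDiff_succ_iff_deriv.mp hγ).2.2
  have hd1 : Differentiable ℝ γ := hγ.differentiable two_ne_zero
  have hd2 : Differentiable ℝ (deriv γ) := h2.differentiable one_ne_zero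
  set d := deriv γ x with hd
  set F : ℝ → ℝ := fun s => γ x + d * s + M * s ^ 2 / 2 - γ (x + s) with hF
  set G : ℝ → ℝ := fun s => d + M * s - deriv γ (x + s) with hG
  have hcomp : ∀ s : ℝ, HasDerivAt (fun u : ℝ => γ (x + u)) (deriv γ (x + s)) s := by
    intro s
    simpa [Function.comp_def] using (hd1 (x + s)).hasDerivAt.comp s ((hasDerivAt_id s).const_add x)
  have hcomp2 : ∀ s : ℝ, HasDerivAt (fun u : ℝ => deriv γ (x + u))
      (deriv (deriv γ) (x + s)) s := by
    intro s
    simpa [Function.comp_def] using (hd2 (x + s)).hasDerivAt.comp s ((hasDerivAt_id s).const_add x)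
  have hFd : ∀ s, HasDerivAt F (G s) s := by
    intro s
    have h1 : HasDerivAt (fun u : ℝ => γ x + d * u + M * u ^ 2 / 2) (d + M * s) s := by
      have ha : HasDerivAt (fun u : ℝ => γ x + d * u) d s := by
        simpa using ((hasDerivAt_id s).const_mul d).const_add (γ x)
      have hb : HasDerivAt (fun u : ℝ => M * u ^ 2 / 2) (M * s) s := by
        have := ((hasDerivAt_pow 2 s).const_mul M).div_const 2
        simpa using this.congr_deriv (by ring)
      simpa [Pi.add_def] using ha.add hb
    simpa [hG, hF, Pi.sub_def] using h1.sub (hcomp s)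
  have hGd : ∀ s, HasDerivAt G (M - deriv (deriv γ) (x + s)) s := by
    intro s
    have h1 : HasDerivAt (fun u : ℝ => d + M * u) M s := by
      simpa using ((hasDerivAt_id s).const_mul M).const_add d
    simpa [hG, Pi.sub_def] using h1.sub (hcomp2 s)
  have hGmono : Monotone G := by
    apply monotone_of_deriv_nonneg (fun s => (hGd s).differentiableAt)
    intro s
    rw [(hGd s).deriv]
    have := abs_le.mp (hM (x + s))
    linarith [this.2]
  have hG0 : G 0 = 0 := by simp [hG, hd]
  have hF0 : F 0 = 0 := by simp [hF]
  have hFcont : Continuous F := by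
    have : Differentiable ℝ F := fun s => (hFd s).differentiableAt
    exact this.continuous
  have key : 0 ≤ F t := by
    rcases le_total 0 t with ht | ht
    · have hm : MonotoneOn F (Icc 0 t) := by
        apply monotoneOn_of_deriv_nonneg (convex_Icc 0 t) hFcont.continuousOn
          (fun s _ => (hFd s).differentiableAt.differentiableWithinAt)
        intro s hs
        rw [(hFd s).deriv]
        calc (0:ℝ) = G 0 := hG0.symm
          _ ≤ G s := hGmono ((mem_Ioo.mp (by rwa [interior_Icc] at hs)).1.le)
      have := hm (left_mem_Icc.mpr ht) (right_mem_Icc.mpr ht) ht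
      simpa [hF0] using this
    · have hm : AntitoneOn F (Icc t 0) := by
        apply antitoneOn_of_deriv_nonpos (convex_Icc t 0) hFcont.continuousOn
          (fun s _ => (hFd s).differentiableAt.differentiableWithinAt)
        intro s hs
        rw [(hFd s).deriv]
        rw [interior_Icc] at hs
        calc G s ≤ G 0 := hGmono hs.2.le
          _ = 0 := hG0
      have := hm (left_mem_Icc.mpr ht) (right_mem_Icc.mpr ht) ht
      simpa [hF0] using this
  simpa [hF] using sub_nonneg.mp key

/-- The supremum of `|γ''|` bounds `|γ''|` pointwise (boundedness comes from
continuity and periodicity). -/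
lemma bound_second_aux {γ : ℝ → ℝ} (hγ : ContDiff ℝ 2 γ)
    (hper : ∀ x, γ (x + 2 * Real.pi) = γ x) (x : ℝ) :
    |deriv (deriv γ) x| ≤ ⨆ y, |deriv (deriv γ) y| := by
  have h2 : ContDiff ℝ 1 (deriv γ) := by
    have h21 : (2 : WithTop ℕ∞) = 1 + 1 := by norm_num
    rw [h21] at hγ
    exact (contDiff_succ_iff_deriv.mp hγ).2.2
  have hcont : Continuous (deriv (deriv γ)) := (contDiff_one_iff_deriv.mp h2).2
  have hp1 : Function.Periodic (deriv γ) (2 * Real.pi) := fun y => by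
    rw [← deriv_comp_add_const γ (2 * Real.pi) y]
    congr 1
    ext z
    exact hper z
  have hp2 : Function.Periodic (deriv (deriv γ)) (2 * Real.pi) := fun y => by
    rw [← deriv_comp_add_const (deriv γ) (2 * Real.pi) y]
    congr 1
    ext z
    exact hp1 z
  have hpa : Function.Periodic (fun y => |deriv (deriv γ) y|) (2 * Real.pi) := fun y => by
    simp [hp2 y]
  have hb : BddAbove (Set.range fun y => |deriv (deriv γ) y|) := by
    rw [← hpa.image_Icc Real.two_pi_pos 0]
    exact (isCompact_Icc.image hcont.abs).bddAbove
  exact le_ciSup hb x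

/-- For a positive function with `|γ''| ≤ M` one has `(γ')² ≤ 2 M γ`. -/
lemma deriv_sq_le_aux {γ : ℝ → ℝ} (hγ : ContDiff ℝ 2 γ) (hpos : ∀ x, 0 < γ x) {M : ℝ}
    (hM : ∀ x, |deriv (deriv γ) x| ≤ M) (θ : ℝ) :
    (deriv γ θ) ^ 2 ≤ 2 * M * γ θ := by
  have htay := taylor_up_aux hγ hM
  have hM0 : 0 ≤ M := le_trans (abs_nonneg _) (hM 0)
  set d := deriv γ θ with hd
  rcases eq_or_lt_of_le hM0 with h0 | hMpos
  · have hd0 : d = 0 := by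
      by_contra hdne
      have ht := htay θ (-(γ θ + 1) / d)
      have hp := hpos (θ + -(γ θ + 1) / d)
      have heq : d * (-(γ θ + 1) / d) = -(γ θ + 1) := by field_simp
      rw [← h0, heq] at ht
      have ht' : γ (θ + -(γ θ + 1) / d) ≤ γ θ + -(γ θ + 1) := by linarith
      linarith
    rw [hd0, ← h0]
    norm_num
  · have ht := htay θ (-d / M)
    have hp := hpos (θ + -d / M)
    have hMne : M ≠ 0 := ne_of_gt hMpos
    have heq : γ θ + d * (-d / M) + M * (-d / M) ^ 2 / 2 = γ θ - d ^ 2 / (2 * M) := by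
      field_simp
      ring
    rw [heq] at ht
    have h3 : d ^ 2 / (2 * M) < γ θ := by linarith
    have := (div_lt_iff₀ (by linarith : (0:ℝ) < 2 * M)).mp h3
    nlinarith

theorem stmt11 (γ : ℝ → ℝ) (hγ : ContDiff ℝ 2 γ)
    (hper : ∀ x, γ (x + 2 * Real.pi) = γ x) (hpos : ∀ x, 0 < γ x) (φ θ : ℝ) :
    Qfun γ φ θ + Pfun γ 0 φ θ + γ θ ≥
      -(9 / 2) * (⨆ x, |deriv (deriv γ) x|) * Real.sin φ ^ 2 := by
  set M := ⨆ x, |deriv (deriv γ) x| with hMdef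
  have hM : ∀ x, |deriv (deriv γ) x| ≤ M := bound_second_aux hγ hper
  have hM0 : 0 ≤ M := le_trans (abs_nonneg _) (hM 0)
  have hsq : (deriv γ θ) ^ 2 ≤ 2 * M * γ θ := deriv_sq_le_aux hγ hpos hM θ
  have hg : 0 < γ θ := hpos θ
  have hQ : 0 < γ (θ - φ) := hpos _
  set s := Real.sin φ with hs
  set c := Real.cos φ with hc
  set g := γ θ with hgdef
  set d := deriv γ θ with hd
  have hs2c2 : s ^ 2 + c ^ 2 = 1 := sin_sq_add_cos_sq φ
  have hc1 : -1 ≤ c := neg_one_le_cos φ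
  have hc2 : c ≤ 1 := cos_le_one φ
  have h2φ : Real.sin (2 * φ) = 2 * s * c := sin_two_mul φ
  have key : d * s * (1 + 2 * c) ≤ g + (9 / 2) * M * s ^ 2 := by
    have h1 : d ^ 2 * s ^ 2 ≤ 2 * M * g * s ^ 2 :=
      mul_le_mul_of_nonneg_right hsq (sq_nonneg s)
    have h2c : (1 + 2 * c) ^ 2 ≤ 9 := by nlinarith
    have h2 : (d * s * (1 + 2 * c)) ^ 2 ≤ 9 * (d ^ 2 * s ^ 2) := by
      nlinarith [mul_le_mul_of_nonneg_left h2c (sq_nonneg (d * s))]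
    have h3 : 18 * M * g * s ^ 2 ≤ (g + (9 / 2) * M * s ^ 2) ^ 2 := by
      nlinarith [sq_nonneg (g - (9 / 2) * M * s ^ 2)]
    have hX0 : 0 ≤ g + (9 / 2) * M * s ^ 2 := by positivity
    nlinarith [h1, h2, h3, hX0]
  simp only [Qfun, Pfun, h2φ, ← hs, ← hc, ← hgdef, ← hd]
  nlinarith [key, hQ, mul_nonneg hg.le (by linarith : (0:ℝ) ≤ 1 + c)]
end

section
/- Taylor-type bound for periodic C² functions: Let f : ℝ → ℝ be C² and 2π-periodic with f ≥ 0, and let C ≥ sup|f''|. Then 0 ≤ f(x) + f'(x)·y + (C/2)·y² for all x, y ∈ ℝ. -/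
lemma periodic_deriv_aux (f : ℝ → ℝ) (T : ℝ) (h : Function.Periodic f T) :
    Function.Periodic (deriv f) T := by
  intro t
  have h2 : deriv f (t + T) = deriv (fun x => f (x + T)) t := (deriv_comp_add_const f T t).symm
  rw [h2]; congr 1; exact funext h

theorem stmt17 (f : ℝ → ℝ) (hf : ContDiff ℝ 2 f)
    (hper : ∀ x, f (x + 2 * Real.pi) = f x) (hnn : ∀ x, 0 ≤ f x)
    (C : ℝ) (hC : C ≥ ⨆ x, |deriv (deriv f) x|) :
    ∀ x y : ℝ, 0 ≤ f x + deriv f x * y + C / 2 * y ^ 2 := by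
  have hf1 : Differentiable ℝ f := hf.differentiable (by norm_num)
  have hfd1 : ContDiff ℝ 1 (deriv f) := by
    have h2 : ContDiff ℝ (1 + 1) f := by exact_mod_cast hf
    exact (contDiff_succ_iff_deriv.mp h2).2.2
  have hf'd : Differentiable ℝ (deriv f) := hfd1.differentiable (by norm_num)
  have hf'' : Continuous (deriv (deriv f)) := hfd1.continuous_deriv le_rfl
  -- periodicity of |f''|
  have hperf : Function.Periodic f (2 * Real.pi) := hper
  have hper2 : Function.Periodic (fun t => |deriv (deriv f) t|) (2 * Real.pi) := by
    intro t
    simp only [periodic_deriv_aux _ _ (periodic_deriv_aux _ _ hperf) t]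
  -- boundedness of |f''|
  have hbdd : BddAbove (Set.range fun t => |deriv (deriv f) t|) := by
    rw [← hper2.image_Icc Real.two_pi_pos 0]
    exact (isCompact_Icc.image_of_continuousOn (hf''.abs.continuousOn)).bddAbove
  have hbound : ∀ t, |deriv (deriv f) t| ≤ C := fun t =>
    le_trans (le_ciSup hbdd t) hC
  -- Lipschitz bound for f'
  have hlip : ∀ a b : ℝ, |deriv f b - deriv f a| ≤ C * |b - a| := by
    intro a b
    have := convex_univ.norm_image_sub_le_of_norm_deriv_le (f := deriv f)
      (fun t _ => (hf'd t)) (fun t _ => hbound t) (Set.mem_univ a) (Set.mem_univ b)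
    simpa using this
  intro x y
  set g : ℝ → ℝ := fun s => f x + deriv f x * s + C / 2 * s ^ 2 - f (x + s) with hg
  have hg' : ∀ t, HasDerivAt g (deriv f x + C * t - deriv f (x + t)) t := by
    intro t
    have h1 : HasDerivAt (fun s : ℝ => f (x + s)) (deriv f (x + t)) t := by
      have hc : HasDerivAt (fun s : ℝ => x + s) 1 t := (hasDerivAt_id t).const_add x
      have := ((hf1 (x + t)).hasDerivAt).comp t hc
      rw [mul_one] at this; exact this
    have h2 : HasDerivAt (fun s : ℝ => f x + deriv f x * s + C / 2 * s ^ 2)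
        (deriv f x + C * t) t := by
      have ha : HasDerivAt (fun s : ℝ => f x + deriv f x * s) (deriv f x) t := by
        simpa using ((hasDerivAt_id t).const_mul (deriv f x)).const_add (f x)
      have hb : HasDerivAt (fun s : ℝ => C / 2 * s ^ 2) (C * t) t := by
        have := (hasDerivAt_pow 2 t).const_mul (C / 2)
        rw [show C * t = C / 2 * ((2:ℕ) * t ^ (2 - 1)) by push_cast; ring]
        exact this
      exact ha.add hb
    exact h2.sub h1
  have hgdiff : ∀ t, DifferentiableAt ℝ g t := fun t => (hg' t).differentiableAt
  have hg0 : g 0 = 0 := by simp [hg]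
  -- sign of g' : nonneg for t ≥ 0, nonpos for t ≤ 0
  have hGpos : ∀ t : ℝ, 0 ≤ t → 0 ≤ deriv f x + C * t - deriv f (x + t) := by
    intro t ht
    have h := hlip x (x + t)
    have habs : deriv f (x + t) - deriv f x ≤ C * t := by
      calc deriv f (x + t) - deriv f x ≤ |deriv f (x + t) - deriv f x| := le_abs_self _
        _ ≤ C * |x + t - x| := h
        _ = C * t := by rw [add_sub_cancel_left, abs_of_nonneg ht]
    linarith
  have hGneg : ∀ t : ℝ, t ≤ 0 → deriv f x + C * t - deriv f (x + t) ≤ 0 := by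
    intro t ht
    have h := hlip x (x + t)
    have habs : deriv f x - deriv f (x + t) ≤ C * (-t) := by
      calc deriv f x - deriv f (x + t) ≤ |deriv f (x + t) - deriv f x| := by
            rw [abs_sub_comm]; exact le_abs_self _
        _ ≤ C * |x + t - x| := h
        _ = C * (-t) := by rw [add_sub_cancel_left, abs_of_nonpos ht]
    linarith
  have hgc : Continuous g := Differentiable.continuous (fun t => hgdiff t)
  -- now show g y ≥ 0 by MVT in each case
  have hgy : 0 ≤ g y := by
    rcases lt_trichotomy y 0 with hy | hy | hy
    · obtain ⟨c, hc, hceq⟩ := exists_hasDerivAt_eq_slope g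
        (fun t => deriv f x + C * t - deriv f (x + t)) hy
        hgc.continuousOn (fun t _ => hg' t)
      have h1 : deriv f x + C * c - deriv f (x + c) ≤ 0 := hGneg c hc.2.le
      rw [hceq] at h1
      have h2 : (0:ℝ) < 0 - y := by linarith
      have h3 := mul_nonpos_of_nonpos_of_nonneg h1 h2.le
      rw [div_mul_cancel₀ _ (by linarith : (0:ℝ) - y ≠ 0)] at h3
      linarith [hg0]
    · rw [hy, hg0]
    · obtain ⟨c, hc, hceq⟩ := exists_hasDerivAt_eq_slope g
        (fun t => deriv f x + C * t - deriv f (x + t)) hy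
        hgc.continuousOn (fun t _ => hg' t)
      have h1 : 0 ≤ deriv f x + C * c - deriv f (x + c) := hGpos c hc.1.le
      rw [hceq] at h1
      have h3 := mul_nonneg h1 (by linarith : (0:ℝ) ≤ y - 0)
      rw [div_mul_cancel₀ _ (by linarith : y - (0:ℝ) ≠ 0)] at h3
      linarith [hg0]
  have : f (x + y) ≤ f x + deriv f x * y + C / 2 * y ^ 2 := by
    have := hgy; simp only [hg] at this; linarith
  linarith [hnn (x + y)]
end
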